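/- arXiv:2503.00720 — 9 statements merged into one kernel-verified Lean document; each statement's English description precedes it below -/
import Mathlib

section
/- For all x ≥ 0, one has −11/6 + x + 3e^{-x} − (3/2)e^{-2x} + (1/3)e^{-3x} ≤ x·(1 − e^{-x})^3. -/
/-!
The left-hand side vanishes at `x = 0` and has derivative `(1 - e^{-t})^3`, so it is
`∫₀ˣ (1 - e^{-t})^3 dt`; since the integrand is increasing, the integral is at most
`x (1 - e^{-x})^3`. The mean value theorem gives the same bound without integrating.
-/

open Real Set

theorem sub_le_mul_of_hasDerivAt_of_monotoneOn {F f : ℝ → ℝ} {a b : ℝ} (hab : a ≤ b)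
    (hF : ∀ t ∈ Icc a b, HasDerivAt F (f t) t) (hf : MonotoneOn f (Icc a b)) :
    F b - F a ≤ (b - a) * f b := by
  rcases hab.eq_or_lt with rfl | hlt
  · simp
  obtain ⟨c, hc, hslope⟩ := exists_hasDerivAt_eq_slope F f hlt
    (fun t ht => (hF t ht).continuousAt.continuousWithinAt)
    (fun t ht => hF t (Ioo_subset_Icc_self ht))
  calc F b - F a = (b - a) * f c := by
        rw [hslope, mul_div_cancel₀ _ (sub_ne_zero.2 hlt.ne')]
    _ ≤ (b - a) * f b :=
        mul_le_mul_of_nonneg_left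
          (hf (Ioo_subset_Icc_self hc) (right_mem_Icc.2 hab) hc.2.le) (sub_nonneg.2 hab)

theorem monotone_one_sub_exp_neg_pow_three : Monotone fun t : ℝ => (1 - exp (-t)) ^ 3 :=
  (Odd.strictMono_pow (by decide)).monotone.comp fun _ _ h =>
    sub_le_sub_left (exp_le_exp.2 (neg_le_neg h)) 1

theorem hasDerivAt_antideriv_one_sub_exp_neg_pow_three (t : ℝ) :
    HasDerivAt
      (fun t => -(11 / 6) + t + 3 * exp (-t) - (3 / 2) * exp (-2 * t) + (1 / 3) * exp (-3 * t))
      ((1 - exp (-t)) ^ 3) t := by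
  have hexp (k : ℝ) : HasDerivAt (fun t => exp (k * t)) (exp (k * t) * k) t := by
    simpa using ((hasDerivAt_id t).const_mul k).exp
  have hsum := (((((hasDerivAt_const t (-(11 / 6) : ℝ)).add (hasDerivAt_id' t)).add
    ((hasDerivAt_neg t).exp.const_mul 3)).sub ((hexp (-2)).const_mul (3 / 2))).add
    ((hexp (-3)).const_mul (1 / 3)))
  refine hsum.congr_deriv ?_
  have hpow (n : ℕ) : exp (-n * t) = exp (-t) ^ n := by rw [← exp_nat_mul]; ring_nf
  rw [show (-2 : ℝ) = -(2 : ℕ) by norm_num, show (-3 : ℝ) = -(3 : ℕ) by norm_num, hpow, hpow]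
  ring

theorem calc_ineq_4 (x : ℝ) (hx : 0 ≤ x) :
    -(11 / 6) + x + 3 * Real.exp (-x) - (3 / 2) * Real.exp (-2 * x)
      + (1 / 3) * Real.exp (-3 * x) ≤ x * (1 - Real.exp (-x)) ^ 3 := by
  have h := sub_le_mul_of_hasDerivAt_of_monotoneOn hx
    (fun t _ => hasDerivAt_antideriv_one_sub_exp_neg_pow_three t)
    (monotone_one_sub_exp_neg_pow_three.monotoneOn _)
  norm_num at h ⊢
  exact h
end

section
/- Let λ ∈ (1/2, 1] and f_λ(θ) = λ·sin θ − 2(1−λ)·sin(θ/2). On the interval (0, 2·arccos((1−λ)/λ)), f_λ is strictly concave and attains its maximum at the unique point θ* = 2·arccos((1−λ+√((1−λ)^2+8λ^2))/(4λ)). -/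
open Real Set

set_option maxHeartbeats 2000000 in
theorem f_lambda_strict_concavity_and_max (lam : ℝ) (hlam1 : 1 / 2 < lam) (hlam2 : lam ≤ 1) :
    StrictConcaveOn ℝ (Set.Ioo (0 : ℝ) (2 * Real.arccos ((1 - lam) / lam)))
        (fun θ : ℝ => lam * Real.sin θ - 2 * (1 - lam) * Real.sin (θ / 2)) ∧
      (2 * Real.arccos ((1 - lam + Real.sqrt ((1 - lam) ^ 2 + 8 * lam ^ 2)) / (4 * lam)))
          ∈ Set.Ioo (0 : ℝ) (2 * Real.arccos ((1 - lam) / lam)) ∧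
      ∀ θ ∈ Set.Ioo (0 : ℝ) (2 * Real.arccos ((1 - lam) / lam)),
        (lam * Real.sin θ - 2 * (1 - lam) * Real.sin (θ / 2)
            ≤ lam * Real.sin (2 * Real.arccos
                  ((1 - lam + Real.sqrt ((1 - lam) ^ 2 + 8 * lam ^ 2)) / (4 * lam)))
              - 2 * (1 - lam) * Real.sin (2 * Real.arccos
                  ((1 - lam + Real.sqrt ((1 - lam) ^ 2 + 8 * lam ^ 2)) / (4 * lam)) / 2)) ∧
          (lam * Real.sin θ - 2 * (1 - lam) * Real.sin (θ / 2)
              = lam * Real.sin (2 * Real.arccos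
                    ((1 - lam + Real.sqrt ((1 - lam) ^ 2 + 8 * lam ^ 2)) / (4 * lam)))
                - 2 * (1 - lam) * Real.sin (2 * Real.arccos
                    ((1 - lam + Real.sqrt ((1 - lam) ^ 2 + 8 * lam ^ 2)) / (4 * lam)) / 2) →
            θ = 2 * Real.arccos
                  ((1 - lam + Real.sqrt ((1 - lam) ^ 2 + 8 * lam ^ 2)) / (4 * lam))) := by
  have hl0 : (0:ℝ) < lam := by linarith
  set s := Real.sqrt ((1 - lam) ^ 2 + 8 * lam ^ 2) with hsdef
  have hs0 : 0 ≤ s := Real.sqrt_nonneg _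
  have hs : s ^ 2 = (1 - lam) ^ 2 + 8 * lam ^ 2 := Real.sq_sqrt (by positivity)
  set cst := (1 - lam + s) / (4 * lam) with hcstdef
  set r := (1 - lam) / lam with hrdef
  have hr0 : 0 ≤ r := div_nonneg (by linarith) hl0.le
  have hr1 : r < 1 := by rw [hrdef, div_lt_one hl0]; linarith
  have hsgt : 1 - lam < s := by nlinarith
  have hcst0 : 0 < cst := by
    rw [hcstdef]
    apply div_pos (by nlinarith) (by linarith)
  have hcst1 : cst < 1 := by
    rw [hcstdef, div_lt_one (by linarith)]
    nlinarith
  have hrcst : r < cst := by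
    rw [hrdef, hcstdef, div_lt_div_iff₀ hl0 (by linarith)]
    nlinarith
  have h4 : 4 * lam * cst = 1 - lam + s := by
    rw [hcstdef]; field_simp
  have hroot : 2 * lam * cst ^ 2 - (1 - lam) * cst - lam = 0 := by
    have : (4 * lam * cst) ^ 2 = (1 - lam + s) ^ 2 := by rw [h4]
    nlinarith [this, hs, h4]
  set a := Real.arccos r with hadef
  have ha0 : 0 < a := Real.arccos_pos.2 hr1
  have hapi2 : a ≤ π / 2 := Real.arccos_le_pi_div_two.2 hr0
  have hcosa : Real.cos a = r := Real.cos_arccos (by linarith) hr1.le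
  set t := Real.arccos cst with htdef
  have ht0 : 0 < t := Real.arccos_pos.2 hcst1
  have htpi2 : t ≤ π / 2 := Real.arccos_le_pi_div_two.2 hcst0.le
  have hcost : Real.cos t = cst := Real.cos_arccos (by linarith) hcst1.le
  have hpi : (0:ℝ) < π := Real.pi_pos
  have hta : t < a :=
    Real.strictAntiOn_arccos ⟨by linarith, hr1.le⟩ ⟨by linarith, hcst1.le⟩ hrcst
  set F : ℝ → ℝ := fun θ : ℝ => lam * Real.sin θ - 2 * (1 - lam) * Real.sin (θ / 2) with hFdef
  have hcont : Continuous F := by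
    rw [hFdef]; fun_prop
  have hF' : ∀ x : ℝ, HasDerivAt F (lam * Real.cos x - (1 - lam) * Real.cos (x / 2)) x := by
    intro x
    have h1 : HasDerivAt (fun y : ℝ => Real.sin (y / 2)) (Real.cos (x / 2) * (1 / 2)) x := by
      exact (Real.hasDerivAt_sin (x / 2)).comp x ((hasDerivAt_id x).div_const 2)
    have h2 := ((Real.hasDerivAt_sin x).const_mul lam).sub (h1.const_mul (2 * (1 - lam)))
    rw [hFdef]
    exact h2.congr_deriv (by ring)
  have hDx : ∀ x : ℝ, deriv F x = lam * Real.cos x - (1 - lam) * Real.cos (x / 2) :=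
    fun x => (hF' x).deriv
  have hDF : deriv F = fun x => lam * Real.cos x - (1 - lam) * Real.cos (x / 2) :=
    funext hDx
  have hF'' : ∀ x : ℝ,
      HasDerivAt (deriv F) (-(lam * Real.sin x) + (1 - lam) / 2 * Real.sin (x / 2)) x := by
    intro x
    rw [hDF]
    have h1 : HasDerivAt (fun y : ℝ => Real.cos (y / 2)) (-Real.sin (x / 2) * (1 / 2)) x := by
      exact (Real.hasDerivAt_cos (x / 2)).comp x ((hasDerivAt_id x).div_const 2)
    have h2 := ((Real.hasDerivAt_cos x).const_mul lam).sub (h1.const_mul (1 - lam))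
    exact h2.congr_deriv (by ring)
  -- positivity of deriv on (0, 2t)
  have hpos : ∀ x ∈ Ioo (0:ℝ) (2 * t), 0 < deriv F x := by
    intro x hx
    have hx2 : x / 2 < t := by linarith [hx.2]
    have hc : cst < Real.cos (x / 2) := by
      rw [← hcost]
      exact Real.cos_lt_cos_of_nonneg_of_le_pi (by linarith [hx.1]) (by linarith) hx2
    have hcosx : Real.cos x = 2 * Real.cos (x / 2) ^ 2 - 1 := by
      have h := Real.cos_two_mul (x / 2)
      rw [show 2 * (x / 2) = x by ring] at h
      linarith
    rw [hDx x, hcosx]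
    set c := Real.cos (x / 2) with hcdef
    have hfac : 0 < 2 * lam * c + 2 * lam * cst - (1 - lam) := by nlinarith
    nlinarith [mul_pos (sub_pos.2 hc) hfac, hroot]
  -- negativity of deriv on (2t, 2a)
  have hneg : ∀ x ∈ Ioo (2 * t) (2 * a), deriv F x < 0 := by
    intro x hx
    have hx2 : t < x / 2 := by linarith [hx.1]
    have hx2' : x / 2 < a := by linarith [hx.2]
    have hc : Real.cos (x / 2) < cst := by
      rw [← hcost]
      exact Real.cos_lt_cos_of_nonneg_of_le_pi (by linarith) (by linarith) hx2
    have hcr : r < Real.cos (x / 2) := by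
      rw [← hcosa]
      exact Real.cos_lt_cos_of_nonneg_of_le_pi (by linarith) (by linarith) hx2'
    have hcosx : Real.cos x = 2 * Real.cos (x / 2) ^ 2 - 1 := by
      have h := Real.cos_two_mul (x / 2)
      rw [show 2 * (x / 2) = x by ring] at h
      linarith
    rw [hDx x, hcosx]
    set c := Real.cos (x / 2) with hcdef
    have hc0 : 0 ≤ c := le_trans hr0 hcr.le
    have hfac : 0 < 2 * lam * c + 2 * lam * cst - (1 - lam) := by nlinarith
    nlinarith [mul_pos (sub_pos.2 hc) hfac, hroot]
  -- second derivative negative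
  have hconc : StrictConcaveOn ℝ (Ioo (0:ℝ) (2 * a)) F := by
    apply strictConcaveOn_of_deriv2_neg (convex_Ioo _ _) hcont.continuousOn
    intro x hx
    rw [isOpen_Ioo.interior_eq] at hx
    have hd2 : deriv^[2] F x = -(lam * Real.sin x) + (1 - lam) / 2 * Real.sin (x / 2) :=
      (hF'' x).deriv
    rw [hd2]
    have hx2a : x / 2 < a := by linarith [hx.2]
    have hsinp : 0 < Real.sin (x / 2) :=
      Real.sin_pos_of_pos_of_lt_pi (by linarith [hx.1]) (by linarith)
    have hcr : r < Real.cos (x / 2) := by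
      rw [← hcosa]
      exact Real.cos_lt_cos_of_nonneg_of_le_pi (by linarith [hx.1]) (by linarith) hx2a
    have hsinx : Real.sin x = 2 * Real.sin (x / 2) * Real.cos (x / 2) := by
      have h := Real.sin_two_mul (x / 2)
      rw [show 2 * (x / 2) = x by ring] at h
      linarith
    rw [hsinx]
    have hlr : lam * r = 1 - lam := by rw [hrdef]; field_simp
    have hfac : 0 < 2 * lam * Real.cos (x / 2) - (1 - lam) / 2 := by nlinarith
    nlinarith [mul_pos hsinp hfac]
  have hmono : StrictMonoOn F (Icc 0 (2 * t)) := by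
    apply strictMonoOn_of_deriv_pos (convex_Icc _ _) hcont.continuousOn
    intro x hx
    rw [interior_Icc] at hx
    exact hpos x hx
  have hanti : StrictAntiOn F (Icc (2 * t) (2 * a)) := by
    apply strictAntiOn_of_deriv_neg (convex_Icc _ _) hcont.continuousOn
    intro x hx
    rw [interior_Icc] at hx
    exact hneg x hx
  refine ⟨hconc, ⟨by linarith, by linarith⟩, ?_⟩
  intro θ hθ
  have hineq : ∀ ψ ∈ Ioo (0:ℝ) (2 * a), ψ ≠ 2 * t → F ψ < F (2 * t) := by
    intro ψ hψ hne
    rcases lt_or_gt_of_ne hne with h | h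
    · exact hmono ⟨hψ.1.le, h.le⟩ ⟨by linarith, le_refl _⟩ h
    · exact hanti ⟨le_refl _, by linarith⟩ ⟨h.le, hψ.2.le⟩ h
  constructor
  · rcases eq_or_ne θ (2 * t) with h | h
    · rw [h]
    · exact (hineq θ hθ h).le
  · intro heq
    by_contra h
    exact absurd heq (ne_of_lt (hineq θ hθ h))
end

section
/- Let λ ∈ (1/2, 1] and f_λ(θ) = λ·sin θ − 2(1−λ)·sin(θ/2). Then f_λ(arccos((1−λ)/λ)) = ((2λ−1)^{3/2}/√(2λ))·(2−λ)/(√(λ/2) + (1−λ)). -/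
theorem f_lambda_at_arccos (lam : ℝ) (hlam1 : 1 / 2 < lam) (hlam2 : lam ≤ 1) :
    lam * Real.sin (Real.arccos ((1 - lam) / lam))
        - 2 * (1 - lam) * Real.sin (Real.arccos ((1 - lam) / lam) / 2)
      = ((2 * lam - 1) ^ ((3 : ℝ) / 2) / Real.sqrt (2 * lam))
          * ((2 - lam) / (Real.sqrt (lam / 2) + (1 - lam))) := by
  have h0 : (0:ℝ) < lam := by linarith
  have h2l : (0:ℝ) < 2 * lam - 1 := by linarith
  set c : ℝ := (1 - lam) / lam with hc
  have hc1 : c ≤ 1 := by rw [hc, div_le_one h0]; linarith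
  have hc0 : (-1:ℝ) ≤ c := by
    have : (0:ℝ) ≤ c := div_nonneg (by linarith) h0.le
    linarith
  have hθ0 : 0 ≤ Real.arccos c := Real.arccos_nonneg c
  have hθπ : Real.arccos c ≤ 2 * Real.pi := by
    have := Real.arccos_le_pi c
    have := Real.pi_pos
    linarith
  have hcos : Real.cos (Real.arccos c) = c := Real.cos_arccos hc0 hc1
  set a : ℝ := Real.sqrt (2 * lam - 1) with ha
  set b : ℝ := Real.sqrt (2 * lam) with hb
  have ha2 : a ^ 2 = 2 * lam - 1 := Real.sq_sqrt h2l.le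
  have hb2 : b ^ 2 = 2 * lam := Real.sq_sqrt (by linarith)
  have hapos : 0 < a := Real.sqrt_pos.mpr h2l
  have hbpos : 0 < b := Real.sqrt_pos.mpr (by linarith)
  have hsin : Real.sin (Real.arccos c) = a / lam := by
    rw [Real.sin_arccos]
    have h1 : 1 - c ^ 2 = (2 * lam - 1) / lam ^ 2 := by
      rw [hc]; field_simp; ring
    rw [h1, Real.sqrt_div h2l.le, Real.sqrt_sq h0.le]
  have hhalf : Real.sin (Real.arccos c / 2) = a / b := by
    rw [Real.sin_half_eq_sqrt hθ0 hθπ, hcos]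
    have h1 : (1 - c) / 2 = (2 * lam - 1) / (2 * lam) := by
      rw [hc]; field_simp; ring
    rw [h1, Real.sqrt_div h2l.le]
  have hrpow : (2 * lam - 1) ^ ((3 : ℝ) / 2) = a ^ 3 := by
    rw [show ((3:ℝ)/2) = (3 : ℕ) * (2⁻¹ : ℝ) by norm_num,
      Real.rpow_natCast_mul h2l.le, show (2 * lam - 1) ^ (3:ℕ) = (a ^ 3) ^ 2 by
        rw [← ha2]; ring, show ((2:ℝ))⁻¹ = 1/2 by norm_num, ← Real.sqrt_eq_rpow,
      Real.sqrt_sq (by positivity)]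
  have hsq : Real.sqrt (lam / 2) = b / 2 := by
    rw [show lam / 2 = (2 * lam) / 2 ^ 2 by ring, Real.sqrt_div (by linarith),
      Real.sqrt_sq (by norm_num)]
  rw [hsin, hhalf, hrpow, hsq]
  have hden : 0 < b / 2 + (1 - lam) := by
    have : (0:ℝ) ≤ 1 - lam := by linarith
    linarith
  have key : (2 - lam) / (b / 2 + (1 - lam)) = (b - 2 * (1 - lam)) / a ^ 2 := by
    rw [div_eq_div_iff hden.ne' (by positivity)]
    linear_combination (2 - lam) * ha2 - (1 / 2) * hb2
  rw [key]
  field_simp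
end

section
/- For all ℓ ∈ [0, π] and α ∈ [ℓ, 2ℓ], one has (1 − cos(ℓ/2))·cos(ℓ − α/2) + 2·cos(ℓ/2)·cos(α/2) ≥ 0. -/
/-!
Write `u = ℓ/2` and `t = (α - ℓ)/2`, so that `0 ≤ t ≤ u ≤ π/2`. Expanding `cos (u ∓ t)` turns the
expression into `cos u (1 + cos u) cos t + sin u (1 - 3 cos u) sin t`. When `cos u ≤ 1/3` both terms
are nonnegative. Otherwise the second coefficient is negative, and moving `t` up to `u` (which
decreases `cos t` and increases `sin t`) can only decrease the expression; at `t = u` it equals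
`1 + cos (3u) ≥ 0` by the triple angle formula.
-/

open Real

lemma cos_add_two_mul_cos_eq (u t : ℝ) :
    (1 - cos u) * cos (u - t) + 2 * cos u * cos (u + t) =
      cos u * (1 + cos u) * cos t + sin u * (1 - 3 * cos u) * sin t := by
  rw [cos_sub, cos_add]
  ring

lemma cos_mul_one_add_cos_mul_cos_add_sin_mul_sin_self (u : ℝ) :
    cos u * (1 + cos u) * cos u + sin u * (1 - 3 * cos u) * sin u = 1 + cos (3 * u) := by
  rw [cos_three_mul]
  linear_combination (1 - 3 * cos u) * sin_sq_add_cos_sq u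

lemma cos_mul_one_add_cos_mul_cos_add_sin_mul_sin_nonneg {u t : ℝ} (hcu : 0 ≤ cos u)
    (hsu : 0 ≤ sin u) (hst₀ : 0 ≤ sin t) (hcos : cos u ≤ cos t) (hsin : sin t ≤ sin u) :
    0 ≤ cos u * (1 + cos u) * cos t + sin u * (1 - 3 * cos u) * sin t := by
  rcases le_or_gt (cos u) (1 / 3) with hsmall | hlarge
  · have hct : 0 ≤ cos t := hcu.trans hcos
    have hcoef : 0 ≤ 1 - 3 * cos u := by linarith
    positivity
  · have hcos' : cos u * (1 + cos u) * cos u ≤ cos u * (1 + cos u) * cos t :=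
      mul_le_mul_of_nonneg_left hcos (by positivity)
    have hsin' : sin u * (3 * cos u - 1) * sin t ≤ sin u * (3 * cos u - 1) * sin u :=
      mul_le_mul_of_nonneg_left hsin (mul_nonneg hsu (by linarith))
    have hend := cos_mul_one_add_cos_mul_cos_add_sin_mul_sin_self u
    linarith [neg_one_le_cos (3 * u)]

theorem trig_ineq_10_general (ℓ α : ℝ) (hℓπ : ℓ ≤ Real.pi)
    (hα1 : ℓ ≤ α) (hα2 : α ≤ 2 * ℓ) :
    0 ≤ (1 - Real.cos (ℓ / 2)) * Real.cos (ℓ - α / 2)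
      + 2 * Real.cos (ℓ / 2) * Real.cos (α / 2) := by
  set u := ℓ / 2 with hu_def
  set t := (α - ℓ) / 2 with ht_def
  have ht₀ : 0 ≤ t := by linarith
  have htu : t ≤ u := by linarith
  have hu : u ≤ π / 2 := by linarith
  rw [show ℓ - α / 2 = u - t by ring, show α / 2 = u + t by ring, cos_add_two_mul_cos_eq]
  refine cos_mul_one_add_cos_mul_cos_add_sin_mul_sin_nonneg ?_ ?_ ?_ ?_ ?_
  · exact cos_nonneg_of_mem_Icc ⟨by linarith, hu⟩
  · exact sin_nonneg_of_nonneg_of_le_pi (ht₀.trans htu) (by linarith)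
  · exact sin_nonneg_of_nonneg_of_le_pi ht₀ (by linarith)
  · exact cos_le_cos_of_nonneg_of_le_pi ht₀ (by linarith) htu
  · exact sin_le_sin_of_le_of_le_pi_div_two (by linarith) hu htu

theorem trig_ineq_10 (ℓ α : ℝ) (hℓ0 : 0 ≤ ℓ) (hℓπ : ℓ ≤ Real.pi)
    (hα1 : ℓ ≤ α) (hα2 : α ≤ 2 * ℓ) :
    0 ≤ (1 - Real.cos (ℓ / 2)) * Real.cos (ℓ - α / 2)
      + 2 * Real.cos (ℓ / 2) * Real.cos (α / 2) :=
  trig_ineq_10_general ℓ α hℓπ hα1 hα2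
end

section
/- Let Θ ∈ ℝ^N with N ≥ 1, λ ∈ (1/2, 1], β ∈ (0, π/2), and suppose the order parameter R and phase φ defined by R·e^{iφ} = (1/N)·Σ_j e^{iθ_j} (with R ≥ 0) satisfy R ≥ λ + (1−λ)·cos β. Then the set A = { i : θ_i ∈ (φ−β, φ+β) mod 2π } has cardinality |A| ≥ λ·N. -/
open scoped Classical

theorem majority_cluster_from_large_R (N : ℕ) (hN : 0 < N) (θ : Fin N → ℝ)
    (lam β R φ : ℝ) (hlam1 : 1 / 2 < lam) (hlam2 : lam ≤ 1)
    (hβ1 : 0 < β) (hβ2 : β < Real.pi / 2) (hR0 : 0 ≤ R)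
    (hRφ : (R : ℂ) * Complex.exp (φ * Complex.I)
      = (1 / N : ℂ) * ∑ j, Complex.exp (θ j * Complex.I))
    (hR : lam + (1 - lam) * Real.cos β ≤ R) :
    lam * N ≤ ((Finset.univ.filter fun i : Fin N =>
      ∃ k : ℤ, φ - β < θ i - 2 * Real.pi * k ∧ θ i - 2 * Real.pi * k < φ + β).card : ℝ) := by
  have hπ := Real.pi_pos
  have hNC : (N : ℂ) ≠ 0 := by exact_mod_cast Nat.cast_ne_zero.mpr hN.ne'
  -- R * N = ∑ cos (θ j - φ)
  have h1 : (R : ℂ) * N = ∑ j, Complex.exp ((θ j - φ : ℝ) * Complex.I) := by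
    have h2 : (R : ℂ) * N = ((1 / N : ℂ) * ∑ j, Complex.exp (θ j * Complex.I))
        * Complex.exp (-(φ * Complex.I)) * N := by
      rw [← hRφ]
      rw [mul_assoc (R:ℂ), ← Complex.exp_add]
      simp
    have h3 : ((1 / N : ℂ) * ∑ j, Complex.exp (θ j * Complex.I))
        * Complex.exp (-(φ * Complex.I)) * N
        = ∑ j, Complex.exp (θ j * Complex.I) * Complex.exp (-(φ * Complex.I)) := by
      rw [← Finset.sum_mul]
      field_simp
      exact Finset.sum_congr rfl fun x _ => by rw [mul_comm]
    rw [h2, h3]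
    apply Finset.sum_congr rfl
    intro j _
    rw [← Complex.exp_add]
    congr 1
    push_cast
    ring
  have hsum : R * N = ∑ j, Real.cos (θ j - φ) := by
    have := congrArg Complex.re h1
    simpa [← Complex.ofReal_sub, Complex.exp_ofReal_mul_I_re] using this
  set A := (Finset.univ.filter fun i : Fin N =>
      ∃ k : ℤ, φ - β < θ i - 2 * Real.pi * k ∧ θ i - 2 * Real.pi * k < φ + β) with hA
  have hcosβ : Real.cos β < 1 := by
    have h := Real.cos_lt_cos_of_nonneg_of_le_pi le_rfl (by linarith) hβ1
    simpa using h
  have hcosβ0 : 0 < Real.cos β := Real.cos_pos_of_mem_Ioo ⟨by linarith, hβ2⟩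
  -- pointwise bound
  have hbound : ∀ j : Fin N, j ∉ A → Real.cos (θ j - φ) ≤ Real.cos β := by
    intro j hj
    simp only [hA, Finset.mem_filter, Finset.mem_univ, true_and, not_exists, not_and] at hj
    have h2π : (0:ℝ) < 2 * Real.pi := by linarith
    set k := toIocDiv h2π (φ - Real.pi) (θ j) with hk
    have hy := sub_toIocDiv_zsmul_mem_Ioc h2π (φ - Real.pi) (θ j)
    set y := θ j - k • (2 * Real.pi) with hydef
    have hy' : y = θ j - 2 * Real.pi * k := by
      rw [hydef, zsmul_eq_mul]; ring
    have hmem : φ - Real.pi < y ∧ y ≤ φ + Real.pi := by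
      refine ⟨hy.1, ?_⟩
      have := hy.2; linarith
    have hnot := hj k
    have hβabs : β ≤ |y - φ| := by
      by_contra h
      push_neg at h
      rw [abs_lt] at h
      exact (hnot (by rw [← hy']; linarith [h.1])) (by rw [← hy']; linarith [h.2])
    have habsπ : |y - φ| ≤ Real.pi := by
      rw [abs_le]; constructor <;> [linarith [hmem.1]; linarith [hmem.2]]
    have hcos : Real.cos (θ j - φ) = Real.cos (y - φ) := by
      have : y - φ = (θ j - φ) - k * (2 * Real.pi) := by rw [hy']; push_cast; ring
      rw [this, Real.cos_sub_int_mul_two_pi]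
    rw [hcos, ← Real.cos_abs]
    exact Real.cos_le_cos_of_nonneg_of_le_pi (le_of_lt hβ1) habsπ hβabs
  -- sum bound
  have hsum_le : ∑ j, Real.cos (θ j - φ) ≤ (A.card : ℝ) + ((N : ℝ) - A.card) * Real.cos β := by
    have hsplit : ∑ j, Real.cos (θ j - φ)
        = ∑ j ∈ A, Real.cos (θ j - φ) + ∑ j ∈ Aᶜ, Real.cos (θ j - φ) := by
      rw [Finset.sum_add_sum_compl]
    rw [hsplit]
    have h1' : ∑ j ∈ A, Real.cos (θ j - φ) ≤ (A.card : ℝ) := by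
      calc ∑ j ∈ A, Real.cos (θ j - φ) ≤ ∑ _j ∈ A, (1:ℝ) :=
            Finset.sum_le_sum fun j _ => Real.cos_le_one _
        _ = (A.card : ℝ) := by simp
    have h2' : ∑ j ∈ Aᶜ, Real.cos (θ j - φ) ≤ ((N : ℝ) - A.card) * Real.cos β := by
      have : ∑ j ∈ Aᶜ, Real.cos (θ j - φ) ≤ ∑ _j ∈ Aᶜ, Real.cos β :=
        Finset.sum_le_sum fun j hj => hbound j (by simpa using hj)
      have hcard : (Aᶜ.card : ℝ) = (N : ℝ) - A.card := by
        have := Finset.card_compl A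
        simp [this]
        have hle : A.card ≤ N := by
          simpa using Finset.card_le_card (Finset.subset_univ A)
        push_cast [Nat.cast_sub hle]
        ring
      calc ∑ j ∈ Aᶜ, Real.cos (θ j - φ) ≤ ∑ _j ∈ Aᶜ, Real.cos β := this
        _ = (Aᶜ.card : ℝ) * Real.cos β := by simp [Finset.sum_const, mul_comm]
        _ = ((N : ℝ) - A.card) * Real.cos β := by rw [hcard]
    linarith
  have hNR : (lam + (1 - lam) * Real.cos β) * N ≤ R * N := by
    have : (0:ℝ) ≤ N := Nat.cast_nonneg N
    nlinarith
  rw [hsum] at hNR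
  have key : (lam + (1 - lam) * Real.cos β) * N ≤ (A.card : ℝ) + ((N : ℝ) - A.card) * Real.cos β :=
    le_trans hNR hsum_le
  nlinarith [key, hcosβ, Nat.cast_nonneg (α := ℝ) N]
end

section
/- Let Θ ∈ ℝ^N, λ ∈ (1/2, 1], β ∈ (0, π/2). Define R, φ by R·e^{iφ} = (1/N)Σ_j e^{iθ_j} (R ≥ 0), and Δ = (1/N)·Σ_k sin²(θ_k − φ). If 2λ + Δ/(1 − cos β) ≤ 1 + R, then the set A = { i : θ_i ∈ (φ−β, φ+β) mod 2π } has cardinality |A| ≥ λ·N. -/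
open scoped Classical

lemma cos_le_of_not_near (φ β x : ℝ) (hβ1 : 0 < β) (hβπ : β ≤ Real.pi)
    (h : ¬ ∃ k : ℤ, φ - β < x - 2 * Real.pi * k ∧ x - 2 * Real.pi * k < φ + β) :
    Real.cos (x - φ) ≤ Real.cos β := by
  push_neg at h
  set k : ℤ := round ((x - φ) / (2 * Real.pi)) with hk
  set y : ℝ := x - φ - 2 * Real.pi * k with hy
  clear_value y
  clear_value k
  have hπ : 0 < Real.pi := Real.pi_pos
  have h2π : (0:ℝ) < 2 * Real.pi := by linarith
  have habs : |y| ≤ Real.pi := by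
    have h1 : |(x - φ) / (2 * Real.pi) - k| ≤ 1 / 2 := by
      rw [hk]; exact abs_sub_round _
    have hyeq : y = ((x - φ) / (2 * Real.pi) - k) * (2 * Real.pi) := by
      rw [hy]; field_simp
    have : |y| = |(x - φ) / (2 * Real.pi) - k| * (2 * Real.pi) := by
      rw [hyeq, abs_mul, abs_of_pos h2π]
    rw [this]
    calc |(x - φ) / (2 * Real.pi) - k| * (2 * Real.pi) ≤ (1/2) * (2 * Real.pi) := by
          exact mul_le_mul_of_nonneg_right h1 (le_of_lt h2π)
      _ = Real.pi := by ring
  have hnot := h k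
  have hβy : β ≤ |y| := by
    by_contra hcon
    push_neg at hcon
    rw [abs_lt] at hcon
    have h1 : φ - β < x - 2 * Real.pi * k := by
      have : x - 2 * Real.pi * k = φ + y := by rw [hy]; ring
      rw [this]; linarith [hcon.1]
    have h2 : x - 2 * Real.pi * k < φ + β := by
      have : x - 2 * Real.pi * k = φ + y := by rw [hy]; ring
      rw [this]; linarith [hcon.2]
    exact absurd h2 (not_lt.mpr (hnot h1))
  have hcoseq : Real.cos (x - φ) = Real.cos y := by
    have : x - φ = y + k * (2 * Real.pi) := by rw [hy]; ring
    rw [this, Real.cos_add_int_mul_two_pi]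
  rw [hcoseq, ← Real.cos_abs]
  exact Real.cos_le_cos_of_nonneg_of_le_pi (le_of_lt hβ1) habs hβy

set_option maxHeartbeats 1000000 in
theorem majority_cluster_from_small_Delta (N : ℕ) (hN : 0 < N) (θ : Fin N → ℝ)
    (lam β R φ : ℝ) (hlam1 : 1 / 2 < lam) (hlam2 : lam ≤ 1)
    (hβ1 : 0 < β) (hβ2 : β < Real.pi / 2) (hR0 : 0 ≤ R)
    (hRφ : (R : ℂ) * Complex.exp (φ * Complex.I)
      = (1 / N : ℂ) * ∑ j, Complex.exp (θ j * Complex.I))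
    (hΔ : 2 * lam + ((1 / N : ℝ) * ∑ k, Real.sin (θ k - φ) ^ 2) / (1 - Real.cos β)
      ≤ 1 + R) :
    lam * N ≤ ((Finset.univ.filter fun i : Fin N =>
      ∃ k : ℤ, φ - β < θ i - 2 * Real.pi * k ∧ θ i - 2 * Real.pi * k < φ + β).card : ℝ) := by
  have hπ : 0 < Real.pi := Real.pi_pos
  have hNR : (0:ℝ) < N := by exact_mod_cast hN
  -- R = average of cosines
  have hRcos : (N:ℝ) * R = ∑ j, Real.cos (θ j - φ) := by
    have h1 := congrArg (fun z => (N:ℂ) * z * Complex.exp (-(φ * Complex.I))) hRφ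
    have hNc : (N:ℂ) ≠ 0 := by exact Nat.cast_ne_zero.mpr hN.ne'
    have hL : (N:ℂ) * ((R:ℂ) * Complex.exp (φ * Complex.I)) * Complex.exp (-(φ * Complex.I))
        = (N:ℝ) * R := by
      rw [mul_assoc, mul_assoc, ← Complex.exp_add]
      simp
    have hRhs : (N:ℂ) * ((1 / N : ℂ) * ∑ j, Complex.exp (θ j * Complex.I))
        * Complex.exp (-(φ * Complex.I))
        = ∑ j, Complex.exp (((θ j - φ : ℝ) : ℂ) * Complex.I) := by
      rw [← mul_assoc]
      have : (N:ℂ) * (1 / N : ℂ) = 1 := by field_simp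
      rw [this, one_mul, Finset.sum_mul]
      refine Finset.sum_congr rfl fun j _ => ?_
      rw [← Complex.exp_add]
      congr 1
      push_cast
      ring
    rw [hL, hRhs] at h1
    have h2 := congrArg Complex.re h1
    rw [Complex.re_sum] at h2
    simp only [Complex.exp_ofReal_mul_I_re] at h2
    simpa using h2
  set A := Finset.univ.filter (fun i : Fin N =>
      ∃ k : ℤ, φ - β < θ i - 2 * Real.pi * k ∧ θ i - 2 * Real.pi * k < φ + β) with hA
  set m := A.card with hm
  have hc : 0 < 1 - Real.cos β := by
    have : Real.cos β < Real.cos 0 := by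
      apply Real.cos_lt_cos_of_nonneg_of_le_pi le_rfl (by linarith) hβ1
    simpa using this
  -- pointwise bound outside A
  have hpt : ∀ i : Fin N, i ∉ A →
      (1 - Real.cos β) * (1 + Real.cos (θ i - φ)) ≤ Real.sin (θ i - φ) ^ 2 := by
    intro i hi
    have hnot : ¬ ∃ k : ℤ, φ - β < θ i - 2 * Real.pi * k ∧ θ i - 2 * Real.pi * k < φ + β := by
      simpa [hA] using hi
    have hcle : Real.cos (θ i - φ) ≤ Real.cos β :=
      cos_le_of_not_near φ β (θ i) hβ1 (by linarith) hnot
    have hsin : Real.sin (θ i - φ) ^ 2 = 1 - Real.cos (θ i - φ) ^ 2 :=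
      Real.sin_sq (θ i - φ)
    nlinarith [Real.neg_one_le_cos (θ i - φ)]
  -- sum splitting
  have hsplit := Finset.sum_filter_add_sum_filter_not Finset.univ
      (fun i : Fin N => ∃ k : ℤ, φ - β < θ i - 2 * Real.pi * k ∧ θ i - 2 * Real.pi * k < φ + β)
      (fun i => Real.sin (θ i - φ) ^ 2)
  set B := Finset.univ.filter (fun i : Fin N =>
      ¬ ∃ k : ℤ, φ - β < θ i - 2 * Real.pi * k ∧ θ i - 2 * Real.pi * k < φ + β) with hB
  have hBmem : ∀ i ∈ B, i ∉ A := by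
    intro i hi
    simp only [hB, Finset.mem_filter] at hi
    simp [hA, hi.2]
  -- total sum lower bound
  have hT1 : ∑ i ∈ B, (1 - Real.cos β) * (1 + Real.cos (θ i - φ))
      ≤ ∑ k, Real.sin (θ k - φ) ^ 2 := by
    calc ∑ i ∈ B, (1 - Real.cos β) * (1 + Real.cos (θ i - φ))
        ≤ ∑ i ∈ B, Real.sin (θ i - φ) ^ 2 :=
          Finset.sum_le_sum fun i hi => hpt i (hBmem i hi)
      _ ≤ ∑ k, Real.sin (θ k - φ) ^ 2 := by
          apply Finset.sum_le_sum_of_subset_of_nonneg (Finset.filter_subset _ _)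
          intro i _ _; positivity
  -- cos sum over B lower bound
  have hcard : (A.card : ℝ) + (B.card : ℝ) = N := by
    have := Finset.card_filter_add_card_filter_not (s := (Finset.univ : Finset (Fin N)))
      (p := fun i : Fin N => ∃ k : ℤ, φ - β < θ i - 2 * Real.pi * k ∧ θ i - 2 * Real.pi * k < φ + β)
    rw [← hA, ← hB] at this
    simp only [Finset.card_univ, Fintype.card_fin] at this
    exact_mod_cast this
  have hcosA : ∑ i ∈ A, Real.cos (θ i - φ) ≤ (A.card : ℝ) := by
    calc ∑ i ∈ A, Real.cos (θ i - φ) ≤ ∑ i ∈ A, (1:ℝ) :=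
          Finset.sum_le_sum fun i _ => Real.cos_le_one _
      _ = (A.card : ℝ) := by simp
  have hcossplit : ∑ i ∈ A, Real.cos (θ i - φ) + ∑ i ∈ B, Real.cos (θ i - φ)
      = ∑ j, Real.cos (θ j - φ) := by
    rw [hA, hB]
    exact Finset.sum_filter_add_sum_filter_not _ _ _
  have hBcos : ∑ i ∈ B, (1 + Real.cos (θ i - φ))
      = (B.card : ℝ) + (∑ j, Real.cos (θ j - φ) - ∑ i ∈ A, Real.cos (θ i - φ)) := by
    rw [Finset.sum_add_distrib]
    simp [← hcossplit]
  -- assemble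
  have hsumB : ∑ i ∈ B, (1 - Real.cos β) * (1 + Real.cos (θ i - φ))
      = (1 - Real.cos β) * ((B.card : ℝ) + (∑ j, Real.cos (θ j - φ) - ∑ i ∈ A, Real.cos (θ i - φ))) := by
    rw [← Finset.mul_sum, hBcos]
  have hT2 : (1 - Real.cos β) * ((B.card : ℝ) + ((N:ℝ) * R - ∑ i ∈ A, Real.cos (θ i - φ)))
      ≤ ∑ k, Real.sin (θ k - φ) ^ 2 := by
    rw [← hRcos] at hsumB
    rw [← hsumB]; exact hT1
  -- from hΔ
  have hdiv : ((1 / N : ℝ) * ∑ k, Real.sin (θ k - φ) ^ 2) / (1 - Real.cos β)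
      ≤ 1 + R - 2 * lam := by linarith
  rw [div_le_iff₀ hc] at hdiv
  have hdiv2 : ∑ k, Real.sin (θ k - φ) ^ 2 ≤ (N:ℝ) * ((1 + R - 2 * lam) * (1 - Real.cos β)) := by
    have h := mul_le_mul_of_nonneg_left hdiv (le_of_lt hNR)
    calc ∑ k, Real.sin (θ k - φ) ^ 2
        = (N:ℝ) * ((1 / N : ℝ) * ∑ k, Real.sin (θ k - φ) ^ 2) := by field_simp
      _ ≤ (N:ℝ) * ((1 + R - 2 * lam) * (1 - Real.cos β)) := h
  have hkey : (B.card : ℝ) + ((N:ℝ) * R - ∑ i ∈ A, Real.cos (θ i - φ))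
      ≤ (N:ℝ) * (1 + R - 2 * lam) := by
    nlinarith [hT2, hdiv2]
  have : (N:ℝ) - (m:ℝ) + (N:ℝ) * R - (m:ℝ) ≤ (N:ℝ) * (1 + R - 2 * lam) := by
    have hB' : (B.card : ℝ) = (N:ℝ) - (m:ℝ) := by linarith
    nlinarith [hcosA, hkey, hB']
  nlinarith [this]
end

section
/- Let a, b, c > 0 with 4ac ≤ b², let I ⊂ ℝ be an open interval, and let y : I → ℝ be continuous such that on any subinterval J ⊂ I on which y > 0 pointwise, y is C² and a·y'' + b·y' + c·y > 0 on J. If t₀ ∈ I satisfies y(t₀) > 0 and y'(t₀) ≥ 0, then y(t) > 0 for all t ∈ I with t ≥ t₀. -/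
theorem sturm_picone_comparison (a b c : ℝ) (ha : 0 < a) (hb : 0 < b) (hc : 0 < c)
    (habc : 4 * a * c ≤ b ^ 2) (I : Set ℝ) (hIopen : IsOpen I) (hIconn : I.OrdConnected)
    (y : ℝ → ℝ) (hy : ContinuousOn y I)
    (hhyp : ∀ J : Set ℝ, J ⊆ I → IsOpen J → J.OrdConnected → (∀ t ∈ J, 0 < y t) →
      ContDiffOn ℝ 2 y J ∧
        ∀ t ∈ J, 0 < a * deriv (deriv y) t + b * deriv y t + c * y t)
    (t₀ : ℝ) (ht₀ : t₀ ∈ I) (hy0 : 0 < y t₀) (hy0' : 0 ≤ deriv y t₀) :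
    ∀ t ∈ I, t₀ ≤ t → 0 < y t := by
  intro T hT hTge
  by_contra hcon
  push_neg at hcon
  have hIcc : Set.Icc t₀ T ⊆ I := Set.OrdConnected.out hIconn ht₀ hT
  -- first zero t₁
  obtain ⟨t₁, ht₁le, ht₁T, ht₁0, hposIco⟩ :
      ∃ t₁, t₀ ≤ t₁ ∧ t₁ ≤ T ∧ y t₁ ≤ 0 ∧ ∀ s ∈ Set.Ico t₀ t₁, 0 < y s := by
    have hSclosed : IsClosed (Set.Icc t₀ T ∩ y ⁻¹' Set.Iic 0) :=
      (hy.mono hIcc).preimage_isClosed_of_isClosed isClosed_Icc isClosed_Iic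
    have hSbdd : BddBelow (Set.Icc t₀ T ∩ y ⁻¹' Set.Iic 0) := ⟨t₀, fun s hs => hs.1.1⟩
    have hSne : (Set.Icc t₀ T ∩ y ⁻¹' Set.Iic 0).Nonempty := ⟨T, ⟨hTge, le_refl T⟩, hcon⟩
    have hmem := hSclosed.csInf_mem hSne hSbdd
    refine ⟨sInf _, hmem.1.1, hmem.1.2, hmem.2, ?_⟩
    intro s hs
    rcases le_or_gt (y s) 0 with hsle | h
    · exact absurd (csInf_le hSbdd ⟨⟨hs.1, hs.2.le.trans hmem.1.2⟩, hsle⟩) (not_le.mpr hs.2)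
    · exact h
  have ht₀lt : t₀ < t₁ :=
    lt_of_le_of_ne ht₁le (fun he => absurd ht₁0 (not_le.mpr (he ▸ hy0)))
  -- neighborhood of t₀ inside I where y > 0
  obtain ⟨ε, hε, hball⟩ : ∃ ε > 0, Metric.ball t₀ ε ⊆ I ∩ {s | 0 < y s} := by
    apply Metric.mem_nhds_iff.mp
    have h1 : I ∈ nhds t₀ := hIopen.mem_nhds ht₀
    have h2 : {s | 0 < y s} ∈ nhds t₀ :=
      (continuousAt_const.eventually_lt (hy.continuousAt h1) hy0)
    exact Filter.inter_mem h1 h2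
  -- the open positivity interval J
  set J : Set ℝ := Set.Ioo (t₀ - ε) t₁ with hJ
  have ht₀J : t₀ ∈ J := ⟨by linarith, ht₀lt⟩
  have hJsplit : ∀ s ∈ J, s ∈ I ∧ 0 < y s := by
    intro s hs
    rcases lt_or_ge s t₀ with h | h
    · have : s ∈ Metric.ball t₀ ε := by
        rw [Metric.mem_ball, Real.dist_eq, abs_lt]; constructor <;> [linarith [hs.1]; linarith]
      exact (hball this).imp id id
    · exact ⟨hIcc ⟨h, hs.2.le.trans ht₁T⟩, hposIco s ⟨h, hs.2⟩⟩
  obtain ⟨hC2, hineq⟩ := hhyp J (fun s hs => (hJsplit s hs).1) isOpen_Ioo Set.ordConnected_Ioo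
    (fun s hs => (hJsplit s hs).2)
  -- characteristic roots
  obtain ⟨r₁, r₂, hsum, hprod, hr₂neg⟩ :
      ∃ r₁ r₂ : ℝ, a * (r₁ + r₂) = -b ∧ a * (r₁ * r₂) = c ∧ r₂ < 0 := by
    have hbD : (0:ℝ) ≤ b ^ 2 - 4 * a * c := by linarith
    have hD2 : Real.sqrt (b ^ 2 - 4 * a * c) ^ 2 = b ^ 2 - 4 * a * c := Real.sq_sqrt hbD
    have hDnn : 0 ≤ Real.sqrt (b ^ 2 - 4 * a * c) := Real.sqrt_nonneg _
    have hDlt : Real.sqrt (b ^ 2 - 4 * a * c) < b := by nlinarith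
    refine ⟨(-b - Real.sqrt (b ^ 2 - 4 * a * c)) / (2 * a),
           (-b + Real.sqrt (b ^ 2 - 4 * a * c)) / (2 * a), ?_, ?_, ?_⟩
    · field_simp; ring
    · field_simp; nlinarith [Real.sq_sqrt (show (0:ℝ) ≤ b ^ 2 - a * 4 * c by linarith)]
    · exact div_neg_of_neg_of_pos (by linarith) (by linarith)
  -- derivatives on J
  have hdy : ∀ x ∈ J, HasDerivAt y (deriv y x) x := fun x hx =>
    ((hC2.differentiableOn (by norm_num)).differentiableAt (isOpen_Ioo.mem_nhds hx)).hasDerivAt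
  have hC1d : ContDiffOn ℝ 1 (deriv y) J := hC2.deriv_of_isOpen isOpen_Ioo (by norm_num)
  have hd2y : ∀ x ∈ J, HasDerivAt (deriv y) (deriv (deriv y) x) x := fun x hx =>
    ((hC1d.differentiableOn (by norm_num)).differentiableAt (isOpen_Ioo.mem_nhds hx)).hasDerivAt
  -- the reduced function u
  set u : ℝ → ℝ := fun t => deriv y t - r₂ * y t with hu
  have hu0 : 0 < u t₀ := by simp only [hu]; nlinarith
  have huderiv : ∀ x ∈ J, HasDerivAt u (deriv (deriv y) x - r₂ * deriv y x) x := fun x hx =>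
    (hd2y x hx).sub ((hdy x hx).const_mul r₂)
  -- key inequality : u' - r₁ u > 0 on J
  have hkey : ∀ x ∈ J, 0 < (deriv (deriv y) x - r₂ * deriv y x) - r₁ * u x := by
    intro x hx
    have h0 := hineq x hx
    have heq : a * ((deriv (deriv y) x - r₂ * deriv y x) - r₁ * u x)
        = a * deriv (deriv y) x + b * deriv y x + c * y x := by
      simp only [hu]
      linear_combination (-(deriv y x)) * hsum + (y x) * hprod
    nlinarith [h0, heq]
  -- g = u * exp(-r₁ t) strictly increasing on J
  set g : ℝ → ℝ := fun t => u t * Real.exp (-r₁ * t) with hg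
  have hgderiv : ∀ x ∈ J, HasDerivAt g
      (((deriv (deriv y) x - r₂ * deriv y x) - r₁ * u x) * Real.exp (-r₁ * x)) x := by
    intro x hx
    have he : HasDerivAt (fun t => Real.exp (-r₁ * t)) (Real.exp (-r₁ * x) * (-r₁)) x := by
      simpa using ((hasDerivAt_id x).const_mul (-r₁)).exp
    have := (huderiv x hx).mul he
    refine this.congr_deriv ?_
    ring
  have hgmono : StrictMonoOn g J := by
    apply strictMonoOn_of_deriv_pos (convex_Ioo _ _)
    · exact fun x hx => (hgderiv x hx).continuousAt.continuousWithinAt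
    · intro x hx
      rw [interior_Ioo] at hx
      rw [(hgderiv x hx).deriv]
      exact mul_pos (hkey x hx) (Real.exp_pos _)
  have hupos : ∀ x ∈ Set.Ico t₀ t₁, 0 < u x := by
    intro x hx
    rcases eq_or_lt_of_le hx.1 with rfl | hlt
    · exact hu0
    · have hxJ : x ∈ J := ⟨by linarith [hx.1], hx.2⟩
      have h1 := hgmono ht₀J hxJ hlt
      have hg0 : 0 < g t₀ := mul_pos hu0 (Real.exp_pos _)
      have h2 : 0 < g x := lt_trans hg0 h1
      simp only [hg] at h2
      nlinarith [Real.exp_pos (-r₁ * x), h2]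
  -- h = y * exp(-r₂ t) strictly increasing on [t₀, t₁]
  set h : ℝ → ℝ := fun t => y t * Real.exp (-r₂ * t) with hh
  have hhmono : StrictMonoOn h (Set.Icc t₀ t₁) := by
    apply strictMonoOn_of_deriv_pos (convex_Icc _ _)
    · apply ContinuousOn.mul
      · exact hy.mono (fun s hs => hIcc ⟨hs.1, hs.2.trans ht₁T⟩)
      · exact (Real.continuous_exp.comp (continuous_const.mul continuous_id)).continuousOn
    · intro x hx
      rw [interior_Icc] at hx
      have hxJ : x ∈ J := ⟨by linarith [hx.1], hx.2⟩
      have he : HasDerivAt (fun t => Real.exp (-r₂ * t)) (Real.exp (-r₂ * x) * (-r₂)) x := by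
        simpa using ((hasDerivAt_id x).const_mul (-r₂)).exp
      have hhd : HasDerivAt h (u x * Real.exp (-r₂ * x)) x := by
        have := (hdy x hxJ).mul he
        refine this.congr_deriv ?_
        simp only [hu]
        ring
      rw [hhd.deriv]
      exact mul_pos (hupos x ⟨hx.1.le, hx.2⟩) (Real.exp_pos _)
  have hfin := hhmono (Set.left_mem_Icc.mpr ht₁le) (Set.right_mem_Icc.mpr ht₁le) ht₀lt
  simp only [hh] at hfin
  nlinarith [Real.exp_pos (-r₂ * t₀), Real.exp_pos (-r₂ * t₁), hy0, ht₁0, hfin,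
    mul_pos hy0 (Real.exp_pos (-r₂ * t₀))]
end

section
/- Let a, b, c, T ∈ ℝ with c > 0, and let y : (T,∞) → [0,∞) be a C² function with a·y''(t) + b·y'(t) + c·y(t) ≤ 0 for all t > T, and with sup_{t>T}(|y(t)| + |y'(t)|) < ∞. Then y(t) → 0 as t → ∞. -/
theorem barbalat_type (a b c T : ℝ) (hc : 0 < c) (y : ℝ → ℝ)
    (hy : ContDiffOn ℝ 2 y (Set.Ioi T))
    (hpos : ∀ t, T < t → 0 ≤ y t)
    (hineq : ∀ t, T < t → a * deriv (deriv y) t + b * deriv y t + c * y t ≤ 0)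
    (hbdd : ∃ C : ℝ, ∀ t, T < t → |y t| + |deriv y t| ≤ C) :
    Filter.Tendsto y Filter.atTop (nhds 0) := by
  obtain ⟨C, hC⟩ := hbdd
  have hT1 : T < T + 1 := by linarith
  have hC0 : 0 ≤ C := le_trans (by positivity) (hC (T + 1) hT1)
  have hIoi : IsOpen (Set.Ioi T) := isOpen_Ioi
  have hsub : ∀ {s t : ℝ}, T < s → T < t → Set.uIcc s t ⊆ Set.Ioi T := fun hs ht =>
    Set.OrdConnected.uIcc_subset Set.ordConnected_Ioi hs ht
  have hcont : ContinuousOn y (Set.Ioi T) := hy.continuousOn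
  have hdiff : ∀ t ∈ Set.Ioi T, DifferentiableAt ℝ y t := fun t ht =>
    (hy.differentiableOn two_ne_zero).differentiableAt (hIoi.mem_nhds ht)
  have hy'cd : ContDiffOn ℝ 1 (deriv y) (Set.Ioi T) := by
    exact hy.deriv_of_isOpen hIoi (by norm_num : (1:WithTop ℕ∞) + 1 ≤ 2)
  have hdiff' : ∀ t ∈ Set.Ioi T, DifferentiableAt ℝ (deriv y) t := fun t ht =>
    (hy'cd.differentiableOn one_ne_zero).differentiableAt (hIoi.mem_nhds ht)
  have hInt : ∀ {s t : ℝ}, T < s → T < t → IntervalIntegrable y MeasureTheory.volume s t :=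
    fun hs ht => (hcont.mono (hsub hs ht)).intervalIntegrable
  set G : ℝ → ℝ := fun t => ∫ s in (T + 1)..t, y s with hGdef
  have hGderiv : ∀ t ∈ Set.Ioi T, HasDerivAt G (y t) t := by
    intro t ht
    exact intervalIntegral.integral_hasDerivAt_right (hInt hT1 ht)
      (hcont.stronglyMeasurableAtFilter hIoi t ht)
      (hcont.continuousAt (hIoi.mem_nhds ht))
  set F : ℝ → ℝ := fun t => a * deriv y t + b * y t + c * G t with hFdef
  have hFderiv : ∀ t ∈ Set.Ioi T,
      HasDerivAt F (a * deriv (deriv y) t + b * deriv y t + c * y t) t := by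
    intro t ht
    have h1 : HasDerivAt (deriv y) (deriv (deriv y) t) t := (hdiff' t ht).hasDerivAt
    have h2 : HasDerivAt y (deriv y t) t := (hdiff t ht).hasDerivAt
    have h3 := hGderiv t ht
    exact ((h1.const_mul a).add (h2.const_mul b)).add (h3.const_mul c)
  have hanti : AntitoneOn F (Set.Ici (T + 1)) := by
    apply antitoneOn_of_deriv_nonpos (convex_Ici (T + 1))
    · intro t ht
      exact ((hFderiv t (lt_of_lt_of_le hT1 ht)).continuousAt).continuousWithinAt
    · intro t ht
      rw [interior_Ici] at ht
      exact ((hFderiv t (hT1.trans ht)).differentiableAt).differentiableWithinAt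
    · intro t ht
      rw [interior_Ici] at ht
      rw [(hFderiv t (hT1.trans ht)).deriv]
      exact hineq t (hT1.trans ht)
  have hGdiffint : ∀ s t : ℝ, T < s → T < t → G t - G s = ∫ u in s..t, y u := by
    intro s t hs ht
    have h := intervalIntegral.integral_add_adjacent_intervals (hInt hT1 hs) (hInt hs ht)
    simp only [hGdef]
    linarith [h]
  have hGmono : ∀ s t : ℝ, T + 1 ≤ s → s ≤ t → G s ≤ G t := by
    intro s t hs hst
    have hsT : T < s := lt_of_lt_of_le hT1 hs
    have htT : T < t := hsT.trans_le hst
    have h := hGdiffint s t hsT htT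
    have hnn : 0 ≤ ∫ u in s..t, y u :=
      intervalIntegral.integral_nonneg hst (fun u hu => hpos u (hsT.trans_le hu.1))
    linarith
  set M : ℝ := (F (T + 1) + |a| * C + |b| * C) / c with hMdef
  have hGbdd : ∀ t, T + 1 ≤ t → G t ≤ M := by
    intro t ht
    have htT : T < t := lt_of_lt_of_le hT1 ht
    have h1 : F t ≤ F (T + 1) := hanti Set.self_mem_Ici ht ht
    have hb := hC t htT
    have h2 : |y t| ≤ C := by nlinarith [abs_nonneg (deriv y t)]
    have h3 : |deriv y t| ≤ C := by nlinarith [abs_nonneg (y t)]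
    have h4 : -(|a| * C) ≤ a * deriv y t := by
      have := neg_abs_le (a * deriv y t)
      have h5 : |a * deriv y t| ≤ |a| * C := by
        rw [abs_mul]; exact mul_le_mul_of_nonneg_left h3 (abs_nonneg a)
      linarith
    have h6 : -(|b| * C) ≤ b * y t := by
      have := neg_abs_le (b * y t)
      have h7 : |b * y t| ≤ |b| * C := by
        rw [abs_mul]; exact mul_le_mul_of_nonneg_left h2 (abs_nonneg b)
      linarith
    have h8 : c * G t ≤ F (T + 1) + |a| * C + |b| * C := by
      have : F t = a * deriv y t + b * y t + c * G t := rfl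
      linarith
    rw [hMdef, le_div_iff₀ hc]
    linarith
  -- supremum of G
  have hbddA : BddAbove (G '' Set.Ici (T + 1)) := by
    refine ⟨M, ?_⟩
    rintro _ ⟨t, ht, rfl⟩
    exact hGbdd t ht
  have hne : (G '' Set.Ici (T + 1)).Nonempty := ⟨G (T + 1), ⟨T + 1, Set.self_mem_Ici, rfl⟩⟩
  set L : ℝ := sSup (G '' Set.Ici (T + 1)) with hLdef
  have hGleL : ∀ t, T + 1 ≤ t → G t ≤ L := fun t ht => le_csSup hbddA ⟨t, ht, rfl⟩
  -- main argument
  rw [Metric.tendsto_atTop]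
  by_contra hcon
  push_neg at hcon
  obtain ⟨ε, hε, hmain⟩ := hcon
  set δ : ℝ := ε / (2 * (C + 1)) with hδdef
  have hC1 : (0:ℝ) < C + 1 := by linarith
  have hδ : 0 < δ := by positivity
  set Δ : ℝ := δ * ε / 4 with hΔdef
  have hΔpos : 0 < Δ := by positivity
  have hCδ : C * δ ≤ ε / 2 := by
    have h1 : (C + 1) * δ = ε / 2 := by
      rw [hδdef]; field_simp
    nlinarith
  obtain ⟨z, hz, hGs⟩ := exists_lt_of_lt_csSup hne (show L - Δ < L by linarith)
  obtain ⟨s, hs, rfl⟩ := hz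
  obtain ⟨t, htN, hyt⟩ := hmain (max s (T + 1))
  have hts : s ≤ t := le_trans (le_max_left _ _) htN
  have htT1 : T + 1 ≤ t := le_trans (le_max_right _ _) htN
  have htT : T < t := lt_of_lt_of_le hT1 htT1
  rw [Real.dist_eq, sub_zero, abs_of_nonneg (hpos t htT)] at hyt
  -- y ≥ ε/2 on [t, t + δ]
  have hlow : ∀ u ∈ Set.Icc t (t + δ), ε / 2 ≤ y u := by
    intro u hu
    rcases eq_or_lt_of_le hu.1 with heq | hlt
    · subst heq; linarith
    · have huT : T < u := htT.trans hlt
      obtain ⟨ξ, hξ, hξd⟩ := exists_hasDerivAt_eq_slope y (deriv y) hlt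
        (hcont.mono (fun x hx => lt_of_lt_of_le htT hx.1))
        (fun x hx => (hdiff x (htT.trans hx.1)).hasDerivAt)
      have hξT : T < ξ := htT.trans hξ.1
      have hbξ := hC ξ hξT
      have hξC : |deriv y ξ| ≤ C := by nlinarith [abs_nonneg (y ξ)]
      have habs := abs_le.mp hξC
      have hut : u - t ≤ δ := by linarith [hu.2]
      have hne' : u - t ≠ 0 := ne_of_gt (sub_pos.mpr hlt)
      have h1 : y u - y t = deriv y ξ * (u - t) := by
        rw [hξd]; field_simp
      nlinarith [mul_le_mul_of_nonneg_right habs.1 (le_of_lt (sub_pos.mpr hlt)),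
        mul_le_mul_of_nonneg_left hut hC0]
  have hintlow : δ * ε / 2 ≤ ∫ u in t..(t + δ), y u := by
    have h := intervalIntegral.integral_mono_on (by linarith : t ≤ t + δ)
      (intervalIntegrable_const (c := ε / 2)) (hInt htT (by linarith)) hlow
    simpa using h
  have hGt : G t ≤ G (t + δ) - 2 * Δ := by
    have h := hGdiffint t (t + δ) htT (by linarith)
    have : 2 * Δ ≤ δ * (ε / 2) := by rw [hΔdef]; ring_nf; linarith
    linarith
  have h1 : G s ≤ G t := hGmono s t hs hts
  have h2 : G (t + δ) ≤ L := hGleL (t + δ) (by linarith)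
  linarith
end

section
/- Let a, b, c > 0 with 4ac ≤ b², let T ∈ ℝ and M ∈ (0, ∞]. Let y : (T,∞) → ℝ be C² with sup_{t>T} |y'(t)| < ∞ and a·y''(t) + b·y'(t) + c·max{−M, y(t)} ≥ 0 for all t > T. Then liminf_{t→∞} y(t) ≥ 0. -/
open Set Filter Real


lemma cc_mono {f f' : ℝ → ℝ} {p q : ℝ} (hpq : p ≤ q)
    (hf : ∀ t ∈ Set.Icc p q, HasDerivAt f (f' t) t)
    (h0 : ∀ t ∈ Set.Icc p q, 0 ≤ f' t) : f p ≤ f q := by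
  have hm := monotoneOn_of_deriv_nonneg (convex_Icc p q)
    (fun t ht => (hf t ht).continuousAt.continuousWithinAt)
    (fun t ht => ((hf t (interior_subset ht)).differentiableAt).differentiableWithinAt)
    (fun t ht => by rw [(hf t (interior_subset ht)).deriv]; exact h0 t (interior_subset ht))
  exact hm (left_mem_Icc.2 hpq) (right_mem_Icc.2 hpq) hpq

lemma cc_expDeriv (β t : ℝ) : HasDerivAt (fun u => Real.exp (β*u)) (β * Real.exp (β*t)) t := by
  simpa [mul_comm] using ((hasDerivAt_id t).const_mul β).exp

lemma cc_div_transfer {e1 e2 x1 x2 : ℝ} (he2 : 0 < e2) (h : e1 * x1 ≤ e2 * x2) :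
    e1 / e2 * x1 ≤ x2 := by
  rw [div_mul_eq_mul_div, div_le_iff₀ he2]
  nlinarith

lemma cc_exp_inv {x y : ℝ} (hy : 0 < y) (h : 1/y ≤ x) : Real.exp (-x) ≤ y := by
  have h1 : 1/y ≤ Real.exp x := le_trans h (by nlinarith [Real.add_one_le_exp x])
  have h2 : 0 < Real.exp x := Real.exp_pos x
  rw [Real.exp_neg, inv_le_comm₀ h2 hy]
  calc y⁻¹ = 1/y := (one_div y).symm
    _ ≤ Real.exp x := h1

lemma cc_escape {a b c T μ C : ℝ} (ha : 0 < a) (hb : 0 < b) (hc : 0 < c) (hμ : 0 < μ)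
    {y : ℝ → ℝ}
    (Hd : ∀ t, T < t → HasDerivAt y (deriv y t) t)
    (Hd2 : ∀ t, T < t → HasDerivAt (deriv y) (deriv (deriv y) t) t)
    (HC : ∀ t, T < t → |deriv y t| ≤ C)
    (Hineq : ∀ t, T < t → 0 ≤ a * deriv (deriv y) t + b * deriv y t + c * max (-μ) (y t))
    (s : ℝ) (hs : T < s) : ∃ t, s ≤ t ∧ -μ ≤ y t := by
  by_contra hcon
  push_neg at hcon
  have hlow : ∀ t, s ≤ t → c * μ ≤ a * deriv (deriv y) t + b * deriv y t := by
    intro t ht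
    have h1 := Hineq t (lt_of_lt_of_le hs ht)
    have h2 : max (-μ) (y t) = -μ := max_eq_left (hcon t ht).le
    rw [h2] at h1; linarith
  set β := b/a with hβdef
  have hβ : 0 < β := div_pos hb ha
  have haβ : a * β = b := by rw [hβdef]; field_simp
  set K := c*μ/b with hKdef
  have hK : 0 < K := by positivity
  have hbK : b * K = c * μ := by rw [hKdef]; field_simp
  set k := c*μ/(2*b) with hkdef
  have hk : 0 < k := by positivity
  have hKk : K = 2*k := by rw [hKdef, hkdef]; ring
  -- monotonicity of g = exp(βt) (y' - K)
  have hmono : ∀ p q : ℝ, s ≤ p → p ≤ q →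
      Real.exp (β*p) * (deriv y p - K) ≤ Real.exp (β*q) * (deriv y q - K) := by
    intro p q hp hpq
    refine cc_mono (f := fun u => Real.exp (β*u) * (deriv y u - K)) hpq
        (f' := fun t => β * Real.exp (β*t) * (deriv y t - K)
        + Real.exp (β*t) * deriv (deriv y) t) ?_ ?_
    · intro t ht
      have htT : T < t := lt_of_lt_of_le hs (le_trans hp ht.1)
      exact (cc_expDeriv β t).mul ((Hd2 t htT).sub_const K)
    · intro t ht
      have hst : s ≤ t := le_trans hp ht.1
      have hinner : 0 ≤ β * (deriv y t - K) + deriv (deriv y) t := by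
        have key : a * (β * (deriv y t - K) + deriv (deriv y) t)
            = a * deriv (deriv y) t + b * deriv y t - c*μ := by
          rw [mul_add, ← mul_assoc, haβ]; nlinarith [hbK]
        have h3 := hlow t hst
        have h4 : a * 0 ≤ a * (β * (deriv y t - K) + deriv (deriv y) t) := by
          rw [mul_zero, key]; linarith
        exact le_of_mul_le_mul_left h4 ha
      have hE := (Real.exp_pos (β*t)).le
      show 0 ≤ β * Real.exp (β*t) * (deriv y t - K) + Real.exp (β*t) * deriv (deriv y) t
      nlinarith
  have hC0 : 0 ≤ C := le_trans (abs_nonneg _) (HC s hs)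
  set C' := C + K with hC'def
  have hC' : 0 < C' := by positivity
  set Δ := 2*a*C'/(c*μ) with hΔdef
  have hΔ : 0 < Δ := by positivity
  have hβΔ : β * Δ = C'/k := by rw [hβdef, hΔdef, hkdef]; field_simp
  have hexp : Real.exp (-(β*Δ)) ≤ k/C' := by
    apply cc_exp_inv (by positivity)
    rw [hβΔ, one_div_div]
  -- derivative lower bound after s + Δ
  have hder : ∀ t, s + Δ ≤ t → k ≤ deriv y t := by
    intro t ht
    have hst : s ≤ t := by linarith
    have h1 := hmono s t le_rfl hst
    have h2 : Real.exp (β*s) * (-C') ≤ Real.exp (β*s) * (deriv y s - K) := by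
      apply mul_le_mul_of_nonneg_left _ (Real.exp_pos _).le
      have := (abs_le.mp (HC s hs)).1
      linarith
    have h3 := cc_div_transfer (Real.exp_pos (β*t)) (le_trans h2 h1)
    rw [← Real.exp_sub] at h3
    have h4 : Real.exp (β*s - β*t) ≤ k/C' := by
      refine le_trans ?_ hexp
      apply Real.exp_le_exp.2
      nlinarith
    have h5 : Real.exp (β*s - β*t) * (-C') ≥ k/C' * (-C') := by
      apply mul_le_mul_of_nonpos_right h4 (by linarith)
    have h6 : k/C' * (-C') = -k := by field_simp
    nlinarith [h3, h5]
  -- y grows linearly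
  set p := s + Δ with hpdef
  have hyp : ∀ t, p ≤ t → y p + k * (t - p) ≤ y t := by
    intro t ht
    have h1 : y p - k * p ≤ y t - k * t := by
      refine cc_mono (f := fun u => y u - k * u) ht (f' := fun u => deriv y u - k) ?_ ?_
      · intro u hu
        have huT : T < u := by have := hu.1; simp only [hpdef] at this; linarith
        have h := (Hd u huT).sub ((hasDerivAt_id' u).const_mul k); rw [mul_one] at h; exact h
      · intro u hu
        have := hder u hu.1
        show 0 ≤ deriv y u - k
        linarith
    linarith
  have hps : s ≤ p := by linarith
  set tstar := p + (-μ - y p + 1)/k with htstar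
  have hnum : 0 ≤ -μ - y p + 1 := by
    have := hcon p hps
    linarith
  have htp : p ≤ tstar := by
    rw [htstar]
    have : 0 ≤ (-μ - y p + 1)/k := by positivity
    linarith
  have h1 := hyp tstar htp
  have h2 : k * (tstar - p) = -μ - y p + 1 := by
    rw [htstar]; field_simp; ring
  have h3 := hcon tstar (le_trans hps htp)
  rw [h2] at h1
  linarith


lemma cc_pos_cancel {e x : ℝ} (he : 0 < e) (h : 0 ≤ e * x) : 0 ≤ x :=
  le_of_mul_le_mul_left (by simpa using h) he

lemma cc_invariant {a b c T μ r₁ r₂ : ℝ} (ha : 0 < a) (hc : 0 < c) (hμ : 0 < μ)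
    (hr₁ : 0 < r₁) (hr₂ : 0 < r₂) (hsum : a * (r₁ + r₂) = b) (hprod : a * (r₁ * r₂) = c)
    {y : ℝ → ℝ}
    (Hd : ∀ t, T < t → HasDerivAt y (deriv y t) t)
    (Hd2 : ∀ t, T < t → HasDerivAt (deriv y) (deriv (deriv y) t) t)
    (Hineq : ∀ t, T < t → 0 ≤ a * deriv (deriv y) t + b * deriv y t + c * max (-μ) (y t))
    (t₀ : ℝ) (ht₀ : T < t₀) (hy₀ : -μ ≤ y t₀)
    (hw₀ : -(r₂*μ) ≤ deriv y t₀ + r₂ * y t₀) :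
    ∀ t, t₀ ≤ t → -μ ≤ y t := by
  intro t₁ ht₁
  have chain : ∀ q, t₀ ≤ q → (∀ t ∈ Set.Icc t₀ q, -(2*μ) ≤ y t) →
      ∀ t ∈ Set.Icc t₀ q, -μ ≤ y t := by
    intro q hq hlo
    have hw : ∀ t ∈ Set.Icc t₀ q, 0 ≤ deriv y t + r₂ * y t + r₂ * μ := by
      intro t ht
      have hmono : Real.exp (r₁*t₀) * (deriv y t₀ + r₂ * y t₀ + r₂*μ)
          ≤ Real.exp (r₁*t) * (deriv y t + r₂ * y t + r₂*μ) := by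
        refine cc_mono (f := fun u => Real.exp (r₁*u) * (deriv y u + r₂ * y u + r₂*μ)) ht.1
          (f' := fun u => r₁ * Real.exp (r₁*u) * (deriv y u + r₂ * y u + r₂*μ)
            + Real.exp (r₁*u) * (deriv (deriv y) u + r₂ * deriv y u)) ?_ ?_
        · intro u hu
          have huT : T < u := lt_of_lt_of_le ht₀ hu.1
          exact (cc_expDeriv r₁ u).mul
            (((Hd2 u huT).add ((Hd u huT).const_mul r₂)).add_const (r₂*μ))
        · intro u hu
          have huT : T < u := lt_of_lt_of_le ht₀ hu.1
          have hu' : u ∈ Set.Icc t₀ q := ⟨hu.1, le_trans hu.2 ht.2⟩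
          have hlou := hlo u hu'
          have hmax : max (-μ) (y u) ≤ y u + μ := max_le (by linarith) (by linarith)
          have h1 : 0 ≤ a * deriv (deriv y) u + b * deriv y u + c * (y u + μ) := by
            have h2 := Hineq u huT
            nlinarith
          have key : a * (r₁ * (deriv y u + r₂ * y u + r₂*μ)
                + (deriv (deriv y) u + r₂ * deriv y u))
              = a * deriv (deriv y) u + b * deriv y u + c * (y u + μ) := by
            linear_combination (deriv y u) * hsum + (y u + μ) * hprod
          have h4 : a * 0 ≤ a * (r₁ * (deriv y u + r₂ * y u + r₂*μ)
              + (deriv (deriv y) u + r₂ * deriv y u)) := by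
            rw [mul_zero, key]; linarith
          have hinner := le_of_mul_le_mul_left h4 ha
          have hE := (Real.exp_pos (r₁*u)).le
          show 0 ≤ r₁ * Real.exp (r₁*u) * (deriv y u + r₂ * y u + r₂*μ)
              + Real.exp (r₁*u) * (deriv (deriv y) u + r₂ * deriv y u)
          nlinarith
      have h0 : 0 ≤ Real.exp (r₁*t₀) * (deriv y t₀ + r₂ * y t₀ + r₂*μ) :=
        mul_nonneg (Real.exp_pos _).le (by linarith)
      exact cc_pos_cancel (Real.exp_pos (r₁*t)) (le_trans h0 hmono)
    intro t ht
    have hmono : Real.exp (r₂*t₀) * (y t₀ + μ) ≤ Real.exp (r₂*t) * (y t + μ) := by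
      refine cc_mono (f := fun u => Real.exp (r₂*u) * (y u + μ)) ht.1
        (f' := fun u => r₂ * Real.exp (r₂*u) * (y u + μ) + Real.exp (r₂*u) * deriv y u) ?_ ?_
      · intro u hu
        exact (cc_expDeriv r₂ u).mul ((Hd u (lt_of_lt_of_le ht₀ hu.1)).add_const μ)
      · intro u hu
        have hu' : u ∈ Set.Icc t₀ q := ⟨hu.1, le_trans hu.2 ht.2⟩
        have hwu := hw u hu'
        have hE := (Real.exp_pos (r₂*u)).le
        show 0 ≤ r₂ * Real.exp (r₂*u) * (y u + μ) + Real.exp (r₂*u) * deriv y u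
        nlinarith
    have h0 : 0 ≤ Real.exp (r₂*t₀) * (y t₀ + μ) :=
      mul_nonneg (Real.exp_pos _).le (by linarith)
    have := cc_pos_cancel (Real.exp_pos (r₂*t)) (le_trans h0 hmono)
    linarith
  by_contra hcon
  push_neg at hcon
  rcases Set.eq_empty_or_nonempty {t | t ∈ Set.Icc t₀ t₁ ∧ y t ≤ -(2*μ)} with hemp | hne
  · have hlo : ∀ t ∈ Set.Icc t₀ t₁, -(2*μ) ≤ y t := by
      intro t ht
      by_contra h3
      push_neg at h3
      have hmem : t ∈ {t | t ∈ Set.Icc t₀ t₁ ∧ y t ≤ -(2*μ)} := ⟨ht, h3.le⟩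
      rw [hemp] at hmem
      exact hmem
    have := chain t₁ ht₁ hlo t₁ (Set.right_mem_Icc.2 ht₁)
    linarith
  · have hScl : IsClosed {t | t ∈ Set.Icc t₀ t₁ ∧ y t ≤ -(2*μ)} := by
      have hcont : ContinuousOn y (Set.Icc t₀ t₁) := fun t ht =>
        (Hd t (lt_of_lt_of_le ht₀ ht.1)).continuousAt.continuousWithinAt
      have heq : {t | t ∈ Set.Icc t₀ t₁ ∧ y t ≤ -(2*μ)}
          = Set.Icc t₀ t₁ ∩ y ⁻¹' (Set.Iic (-(2*μ))) := by
        ext t; simp [Set.mem_Icc]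
      rw [heq]
      exact hcont.preimage_isClosed_of_isClosed isClosed_Icc isClosed_Iic
    have hbdd : BddBelow {t | t ∈ Set.Icc t₀ t₁ ∧ y t ≤ -(2*μ)} :=
      ⟨t₀, fun t ht => ht.1.1⟩
    have hτS : sInf {t | t ∈ Set.Icc t₀ t₁ ∧ y t ≤ -(2*μ)}
        ∈ {t | t ∈ Set.Icc t₀ t₁ ∧ y t ≤ -(2*μ)} := hScl.csInf_mem hne hbdd
    set τ := sInf {t | t ∈ Set.Icc t₀ t₁ ∧ y t ≤ -(2*μ)} with hτdef
    have hτIcc : τ ∈ Set.Icc t₀ t₁ := hτS.1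
    have hyτle : y τ ≤ -(2*μ) := hτS.2
    have hτgt : t₀ < τ := lt_of_le_of_ne hτIcc.1 (by
      intro h; rw [← h] at hyτle; linarith)
    have hbelow : ∀ t, t₀ ≤ t → t < τ → -(2*μ) < y t := by
      intro t h1 h2
      by_contra h3
      push_neg at h3
      have hmem : t ∈ {t | t ∈ Set.Icc t₀ t₁ ∧ y t ≤ -(2*μ)} :=
        ⟨⟨h1, le_trans h2.le hτIcc.2⟩, h3⟩
      have := csInf_le hbdd hmem
      rw [← hτdef] at this
      linarith
    have hyτge : -(2*μ) ≤ y τ := by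
      have hca : ContinuousAt y τ :=
        (Hd τ (lt_of_lt_of_le ht₀ hτIcc.1)).continuousAt
      have htd : Filter.Tendsto y (nhdsWithin τ (Set.Iio τ)) (nhds (y τ)) :=
        hca.continuousWithinAt
      refine ge_of_tendsto htd ?_
      filter_upwards [Ioo_mem_nhdsLT_of_mem (⟨hτgt, le_refl τ⟩ : τ ∈ Set.Ioc t₀ τ)] with t ht
      exact (hbelow t ht.1.le ht.2).le
    have hlo : ∀ t ∈ Set.Icc t₀ τ, -(2*μ) ≤ y t := by
      intro t ht
      rcases lt_or_eq_of_le ht.2 with h | h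
      · exact (hbelow t ht.1 h).le
      · rw [h]; exact hyτge
    have := chain τ hτIcc.1 hlo τ (Set.right_mem_Icc.2 hτIcc.1)
    linarith


lemma cc_goodpoint {a b c T μ C r₁ r₂ : ℝ} (ha : 0 < a) (hb : 0 < b) (hc : 0 < c)
    (hμ : 0 < μ) (hr₁ : 0 < r₁) (hr₂ : 0 < r₂)
    (hsum : a * (r₁ + r₂) = b) (hprod : a * (r₁ * r₂) = c)
    {y : ℝ → ℝ}
    (Hd : ∀ t, T < t → HasDerivAt y (deriv y t) t)
    (Hd2 : ∀ t, T < t → HasDerivAt (deriv y) (deriv (deriv y) t) t)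
    (HC : ∀ t, T < t → |deriv y t| ≤ C)
    (Hineq : ∀ t, T < t → 0 ≤ a * deriv (deriv y) t + b * deriv y t + c * max (-μ) (y t)) :
    ∃ t₀, T < t₀ ∧ -μ ≤ y t₀ ∧ -(r₂*μ) ≤ deriv y t₀ + r₂ * y t₀ := by
  obtain ⟨t₁, ht₁s, ht₁y⟩ := cc_escape ha hb hc hμ Hd Hd2 HC Hineq (T+1) (by linarith)
  have ht₁T : T < t₁ := by linarith
  by_cases hall : ∀ t, t₁ ≤ t → -μ ≤ y t
  · by_cases hw1 : -(r₂*μ) ≤ deriv y t₁ + r₂ * y t₁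
    · exact ⟨t₁, ht₁T, ht₁y, hw1⟩
    · push_neg at hw1
      have hw₁neg : deriv y t₁ + r₂ * y t₁ < 0 := by nlinarith
      set w₁ := deriv y t₁ + r₂ * y t₁ with hw₁def
      set Δ := (-w₁)/(r₁*r₂*μ) with hΔdef
      have hΔpos : 0 < Δ := div_pos (by linarith) (by positivity)
      have hmono : Real.exp (r₁*t₁) * w₁
          ≤ Real.exp (r₁*(t₁+Δ)) * (deriv y (t₁+Δ) + r₂ * y (t₁+Δ)) := by
        refine cc_mono (f := fun u => Real.exp (r₁*u) * (deriv y u + r₂ * y u)) (by linarith)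
          (f' := fun u => r₁ * Real.exp (r₁*u) * (deriv y u + r₂ * y u)
            + Real.exp (r₁*u) * (deriv (deriv y) u + r₂ * deriv y u)) ?_ ?_
        · intro u hu
          have huT : T < u := lt_of_lt_of_le ht₁T hu.1
          exact (cc_expDeriv r₁ u).mul ((Hd2 u huT).add ((Hd u huT).const_mul r₂))
        · intro u hu
          have huT : T < u := lt_of_lt_of_le ht₁T hu.1
          have hyu := hall u hu.1
          have h1 := Hineq u huT
          rw [max_eq_right hyu] at h1
          have key : a * (r₁ * (deriv y u + r₂ * y u) + (deriv (deriv y) u + r₂ * deriv y u))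
              = a * deriv (deriv y) u + b * deriv y u + c * y u := by
            linear_combination (deriv y u) * hsum + (y u) * hprod
          have h4 : a * 0 ≤ a * (r₁ * (deriv y u + r₂ * y u)
              + (deriv (deriv y) u + r₂ * deriv y u)) := by
            rw [mul_zero, key]; linarith
          have hinner := le_of_mul_le_mul_left h4 ha
          have hE := (Real.exp_pos (r₁*u)).le
          show 0 ≤ r₁ * Real.exp (r₁*u) * (deriv y u + r₂ * y u)
              + Real.exp (r₁*u) * (deriv (deriv y) u + r₂ * deriv y u)
          nlinarith
      have h3 := cc_div_transfer (Real.exp_pos (r₁*(t₁+Δ))) hmono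
      rw [← Real.exp_sub] at h3
      have hsimp : r₁*t₁ - r₁*(t₁+Δ) = -(r₁*Δ) := by ring
      rw [hsimp] at h3
      have hratpos : 0 < (r₂*μ)/(-w₁) := div_pos (by positivity) (by linarith)
      have hexp : Real.exp (-(r₁*Δ)) ≤ (r₂*μ)/(-w₁) := by
        apply cc_exp_inv hratpos
        rw [one_div_div, hΔdef]
        apply le_of_eq
        field_simp
      have h6 : Real.exp (-(r₁*Δ)) * (-w₁) ≤ r₂*μ := (le_div_iff₀ (by linarith)).mp hexp
      have h7 : Real.exp (-(r₁*Δ)) * w₁ = -(Real.exp (-(r₁*Δ)) * (-w₁)) := by ring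
      have hfinal : -(r₂*μ) ≤ deriv y (t₁+Δ) + r₂ * y (t₁+Δ) := by
        rw [h7] at h3; linarith
      exact ⟨t₁+Δ, by linarith, hall _ (by linarith), hfinal⟩
  · push_neg at hall
    obtain ⟨t₂, ht₂ge, ht₂y⟩ := hall
    have ht₂T : T < t₂ := lt_of_lt_of_le ht₁T ht₂ge
    obtain ⟨t₃, ht₃ge, ht₃y⟩ := cc_escape ha hb hc hμ Hd Hd2 HC Hineq t₂ ht₂T
    have hScl : IsClosed {t | t ∈ Set.Icc t₂ t₃ ∧ -μ ≤ y t} := by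
      have hcont : ContinuousOn y (Set.Icc t₂ t₃) := fun t ht =>
        (Hd t (lt_of_lt_of_le ht₂T ht.1)).continuousAt.continuousWithinAt
      have heq : {t | t ∈ Set.Icc t₂ t₃ ∧ -μ ≤ y t}
          = Set.Icc t₂ t₃ ∩ y ⁻¹' (Set.Ici (-μ)) := by
        ext t; simp [Set.mem_Icc]
      rw [heq]
      exact hcont.preimage_isClosed_of_isClosed isClosed_Icc isClosed_Ici
    have hne : Set.Nonempty {t | t ∈ Set.Icc t₂ t₃ ∧ -μ ≤ y t} :=
      ⟨t₃, ⟨⟨ht₃ge, le_refl t₃⟩, ht₃y⟩⟩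
    have hbdd : BddBelow {t | t ∈ Set.Icc t₂ t₃ ∧ -μ ≤ y t} := ⟨t₂, fun t ht => ht.1.1⟩
    have hpS : sInf {t | t ∈ Set.Icc t₂ t₃ ∧ -μ ≤ y t}
        ∈ {t | t ∈ Set.Icc t₂ t₃ ∧ -μ ≤ y t} := hScl.csInf_mem hne hbdd
    set p := sInf {t | t ∈ Set.Icc t₂ t₃ ∧ -μ ≤ y t} with hpdef
    have hpT : T < p := lt_of_lt_of_le ht₂T hpS.1.1
    have ht₂p : t₂ < p := lt_of_le_of_ne hpS.1.1 (by
      intro h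
      have := hpS.2
      rw [← h] at this
      linarith)
    have hbefore : ∀ t, t₂ ≤ t → t < p → y t < -μ := by
      intro t h1 h2
      by_contra h3
      push_neg at h3
      have hmem : t ∈ {t | t ∈ Set.Icc t₂ t₃ ∧ -μ ≤ y t} :=
        ⟨⟨h1, le_trans h2.le hpS.1.2⟩, h3⟩
      have := csInf_le hbdd hmem
      rw [← hpdef] at this
      linarith
    have hder0 : 0 ≤ deriv y p := by
      have hdp := Hd p hpT
      have htd : Filter.Tendsto (slope y p) (nhdsWithin p (Set.Iio p)) (nhds (deriv y p)) :=
        (hasDerivAt_iff_tendsto_slope.mp hdp).mono_left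
          (nhdsWithin_mono p (fun x hx => Set.mem_compl_singleton_iff.mpr (ne_of_lt hx)))
      refine ge_of_tendsto htd ?_
      filter_upwards [Ioo_mem_nhdsLT_of_mem (⟨ht₂p, le_refl p⟩ : p ∈ Set.Ioc t₂ p)] with t ht
      have hyt := hbefore t ht.1.le ht.2
      rw [slope_def_field]
      apply div_nonneg_of_nonpos
      · have := hpS.2; linarith
      · linarith [ht.2]
    refine ⟨p, hpT, hpS.2, ?_⟩
    have hry : r₂ * (-μ) ≤ r₂ * y p := mul_le_mul_of_nonneg_left hpS.2 hr₂.le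
    nlinarith [hder0]


theorem cutoff_comparison (a b c T : ℝ) (ha : 0 < a) (hb : 0 < b) (hc : 0 < c)
    (habc : 4 * a * c ≤ b ^ 2) (M : EReal) (hM : 0 < M)
    (y : ℝ → ℝ) (hy : ContDiffOn ℝ 2 y (Set.Ioi T))
    (hbdd : ∃ C : ℝ, ∀ t, T < t → |deriv y t| ≤ C)
    (hineq : ∀ t, T < t →
      0 ≤ a * deriv (deriv y) t + b * deriv y t
            + c * (max (-M) ((y t : ℝ) : EReal)).toReal) :
    ∀ ε > (0 : ℝ), ∀ᶠ t in Filter.atTop, -ε < y t := by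
  intro ε hε
  obtain ⟨C, HC⟩ := hbdd
  -- derivative facts
  have Hd : ∀ t, T < t → HasDerivAt y (deriv y t) t := by
    intro t ht
    have h1 : DifferentiableOn ℝ y (Set.Ioi T) := hy.differentiableOn (by norm_num)
    exact (h1.differentiableAt (isOpen_Ioi.mem_nhds ht)).hasDerivAt
  have Hd2 : ∀ t, T < t → HasDerivAt (deriv y) (deriv (deriv y) t) t := by
    intro t ht
    have h1 : ContDiffOn ℝ 1 (deriv y) (Set.Ioi T) :=
      hy.deriv_of_isOpen isOpen_Ioi (by norm_num)
    have h2 : DifferentiableOn ℝ (deriv y) (Set.Ioi T) := h1.differentiableOn (by norm_num)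
    exact (h2.differentiableAt (isOpen_Ioi.mem_nhds ht)).hasDerivAt
  -- choose μ
  obtain ⟨μ, hμ0, hμε, hμM⟩ : ∃ μ : ℝ, 0 < μ ∧ μ < ε ∧ ((μ : ℝ) : EReal) ≤ M := by
    by_cases hMtop : M = ⊤
    · exact ⟨ε/2, by linarith, by linarith, by rw [hMtop]; exact le_top⟩
    · have hMbot : M ≠ ⊥ := ne_of_gt (lt_trans (by norm_num) hM)
      have hMr : (0:ℝ) < M.toReal := by
        have h1 := EReal.coe_toReal hMtop hMbot
        have h2 : ((0:ℝ) : EReal) < ((M.toReal : ℝ) : EReal) := by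
          rw [h1]; exact_mod_cast hM
        exact_mod_cast h2
      refine ⟨min (ε/2) M.toReal, by positivity, ?_, ?_⟩
      · calc min (ε/2) M.toReal ≤ ε/2 := min_le_left _ _
          _ < ε := by linarith
      · calc ((min (ε/2) M.toReal : ℝ) : EReal) ≤ ((M.toReal : ℝ) : EReal) := by
              exact_mod_cast min_le_right _ _
          _ = M := EReal.coe_toReal hMtop hMbot
  -- transfer the inequality to the real cutoff μ
  have Hineq : ∀ t, T < t →
      0 ≤ a * deriv (deriv y) t + b * deriv y t + c * max (-μ) (y t) := by
    intro t ht
    have h1 := hineq t ht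
    have hle : (max (-M) ((y t : ℝ) : EReal)).toReal ≤ max (-μ) (y t) := by
      have h2 : max (-M) ((y t : ℝ) : EReal) ≤ ((max (-μ) (y t) : ℝ) : EReal) := by
        apply max_le
        · calc -M ≤ -((μ:ℝ) : EReal) := EReal.neg_le_neg_iff.mpr hμM
            _ = ((-μ : ℝ) : EReal) := by rw [EReal.coe_neg]
            _ ≤ ((max (-μ) (y t) : ℝ) : EReal) := by exact_mod_cast le_max_left _ _
        · exact_mod_cast le_max_right _ _
      have hnb : max (-M) ((y t : ℝ) : EReal) ≠ ⊥ :=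
        ne_of_gt (lt_of_lt_of_le (EReal.bot_lt_coe (y t)) (le_max_right _ _))
      have := EReal.toReal_le_toReal h2 hnb (EReal.coe_ne_top _)
      rwa [EReal.toReal_coe] at this
    have h3 : c * (max (-M) ((y t : ℝ) : EReal)).toReal ≤ c * max (-μ) (y t) :=
      mul_le_mul_of_nonneg_left hle hc.le
    linarith
  -- roots
  set s0 := Real.sqrt (b^2 - 4*a*c) with hs0def
  have hs0sq : s0^2 = b^2 - 4*a*c := Real.sq_sqrt (by linarith)
  have hs0nn : 0 ≤ s0 := Real.sqrt_nonneg _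
  have hs0b : s0 < b := by nlinarith [mul_pos ha hc]
  set r₁ := (b + s0)/(2*a) with hr₁def
  set r₂ := (b - s0)/(2*a) with hr₂def
  have hr₁ : 0 < r₁ := div_pos (by linarith) (by linarith)
  have hr₂ : 0 < r₂ := div_pos (by linarith) (by linarith)
  have hsum : a * (r₁ + r₂) = b := by rw [hr₁def, hr₂def]; field_simp; ring
  have hprod : a * (r₁ * r₂) = c := by
    rw [hr₁def, hr₂def]
    have : (b + s0)/(2*a) * ((b - s0)/(2*a)) = (b^2 - s0^2)/(4*a^2) := by
      field_simp; ring
    rw [this, hs0sq]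
    field_simp
    ring
  obtain ⟨t₀, ht₀T, hy₀, hw₀⟩ :=
    cc_goodpoint ha hb hc hμ0 hr₁ hr₂ hsum hprod Hd Hd2 HC Hineq
  have hinv := cc_invariant ha hc hμ0 hr₁ hr₂ hsum hprod Hd Hd2 Hineq t₀ ht₀T hy₀ hw₀
  rw [Filter.eventually_atTop]
  exact ⟨t₀, fun t ht => lt_of_lt_of_le (by linarith) (hinv t ht)⟩
end
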